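/- If B = Φ_M T Φ_N† and C = Φ_N U Φ_K† are stripe decomposable matrices sharing the middle unitary factor Φ_N, then B C = Φ_M (T U) Φ_K†, and the product T U of two stripe matrices is again a stripe matrix. -/

import Mathlib

open Matrix

/-- Block-diagonal matrix with `K` copies of `P` on the diagonal. -/
def Phi {L : ℕ} (K : ℕ) (P : Matrix (Fin L) (Fin L) ℂ) :
    Matrix (Fin K × Fin L) (Fin K × Fin L) ℂ :=
  fun p q => if p.1 = q.1 then P p.2 q.2 else 0

/-- A stripe matrix: every `L × L` block is a diagonal matrix. -/
def IsStripe {M N L : ℕ} (S : Matrix (Fin M × Fin L) (Fin N × Fin L) ℂ) : Prop :=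
  ∀ i j, Matrix.IsDiag (fun a b => S (i, a) (j, b))

namespace Matrix

variable {α ι k l m n p : Type*}

theorem IsDiag.mul [NonUnitalNonAssocSemiring α] [Fintype n] [DecidableEq n]
    {A B : Matrix n n α} (hA : A.IsDiag) (hB : B.IsDiag) : (A * B).IsDiag := by
  rw [← hA.diagonal_diag, ← hB.diagonal_diag, diagonal_mul_diagonal]
  exact isDiag_diagonal _

theorem isDiag_sum [AddCommMonoid α] (s : Finset ι) {A : ι → Matrix n n α}
    (hA : ∀ i ∈ s, (A i).IsDiag) : (∑ i ∈ s, A i).IsDiag :=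
  Finset.sum_induction _ IsDiag (fun _ _ => IsDiag.add) isDiag_zero hA

theorem submatrix_prodMk_mul [NonUnitalNonAssocSemiring α] [Fintype n] [Fintype l]
    (S : Matrix (m × l) (n × l) α) (T : Matrix (n × l) (k × l) α) (i : m) (j : k) :
    (S * T).submatrix (Prod.mk i) (Prod.mk j) =
      ∑ c, S.submatrix (Prod.mk i) (Prod.mk c) * T.submatrix (Prod.mk c) (Prod.mk j) := by
  ext a b
  simp only [submatrix_apply, mul_apply, Fintype.sum_prod_type, sum_apply]

theorem mul_conjTranspose_mul_mul_cancel [CommRing α] [StarRing α] [Fintype n] [DecidableEq n]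
    {Q : Matrix n n α} (hQ : Q * Qᴴ = 1) (A : Matrix m n α) (B : Matrix n p α) :
    A * Qᴴ * (Q * B) = A * B := by
  rw [Matrix.mul_assoc, ← Matrix.mul_assoc Qᴴ, mul_eq_one_comm.mp hQ, Matrix.one_mul]

end Matrix

theorem IsStripe.mul {M N K L : ℕ} {T : Matrix (Fin M × Fin L) (Fin N × Fin L) ℂ}
    {U : Matrix (Fin N × Fin L) (Fin K × Fin L) ℂ} (hT : IsStripe T) (hU : IsStripe U) :
    IsStripe (T * U) := fun i j => by
  change ((T * U).submatrix (Prod.mk i) (Prod.mk j)).IsDiag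
  rw [submatrix_prodMk_mul]
  exact isDiag_sum _ fun c _ => (hT i c).mul (hU c j)

theorem stripe_mul_general
    {M N K L : ℕ} (PhiM : Matrix (Fin M × Fin L) (Fin M × Fin L) ℂ)
    (PhiN : Matrix (Fin N × Fin L) (Fin N × Fin L) ℂ)
    (PhiK : Matrix (Fin K × Fin L) (Fin K × Fin L) ℂ)
    (hPhiN : PhiN * PhiNᴴ = 1)
    (B : Matrix (Fin M × Fin L) (Fin N × Fin L) ℂ)
    (C : Matrix (Fin N × Fin L) (Fin K × Fin L) ℂ)
    (T : Matrix (Fin M × Fin L) (Fin N × Fin L) ℂ)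
    (U : Matrix (Fin N × Fin L) (Fin K × Fin L) ℂ)
    (hT : IsStripe T) (hU : IsStripe U)
    (hB : B = PhiM * T * PhiNᴴ) (hC : C = PhiN * U * PhiKᴴ) :
    B * C = PhiM * (T * U) * PhiKᴴ ∧ IsStripe (T * U) := by
  refine ⟨?_, hT.mul hU⟩
  rw [hB, hC, Matrix.mul_assoc PhiN, mul_conjTranspose_mul_mul_cancel hPhiN]
  simp only [Matrix.mul_assoc]

theorem stripe_mul
    {M N K L : ℕ} (PhiM : Matrix (Fin M × Fin L) (Fin M × Fin L) ℂ)
    (PhiN : Matrix (Fin N × Fin L) (Fin N × Fin L) ℂ)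
    (PhiK : Matrix (Fin K × Fin L) (Fin K × Fin L) ℂ)
    (hPhiM : PhiM * PhiMᴴ = 1) (hPhiN : PhiN * PhiNᴴ = 1)
    (hPhiK : PhiK * PhiKᴴ = 1)
    (B : Matrix (Fin M × Fin L) (Fin N × Fin L) ℂ)
    (C : Matrix (Fin N × Fin L) (Fin K × Fin L) ℂ)
    (T : Matrix (Fin M × Fin L) (Fin N × Fin L) ℂ)
    (U : Matrix (Fin N × Fin L) (Fin K × Fin L) ℂ)
    (hT : IsStripe T) (hU : IsStripe U)
    (hB : B = PhiM * T * PhiNᴴ) (hC : C = PhiN * U * PhiKᴴ) :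
    B * C = PhiM * (T * U) * PhiKᴴ ∧ IsStripe (T * U) :=
  stripe_mul_general PhiM PhiN PhiK hPhiN B C T U hT hU hB hC
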